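/- Let I, J, K be a partition of {1,…,m} and let Y_0 ⊆ Y be nonempty. The following are equivalent: (i) there exist functions f(y, x_I, x_K), g(y, x_J, x_K) and h(x) such that P(y|x) = f(y, x_I, x_K) · g(y, x_J, x_K) · h(x) for all x ∈ X and all y ∈ Y_0; (ii) ⟨u_H(x), v(y) − v(y')⟩ = 0 for all x ∈ X, all y, y' ∈ Y_0, and all H ⊆ {1,…,m} with H ∩ I ≠ ∅ and H ∩ J ≠ ∅. -/

import Mathlib

/-!
The interaction components `Qop H u` sum to `u`, and `Qop H` annihilates every function that does
not depend on some coordinate in `H`: in the alternating sum defining `Qop H`, the averages over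
`J` and `insert i J` agree for such a coordinate `i`.

Taking logarithms of the softmax, (i) says that `x ↦ ⟪u x, v y - v y'⟫` is a function of `x_{I ∪ K}`
plus a function of `x_{J ∪ K}`; every `Qop H` with `H` meeting both `I` and `J` kills both terms.
Conversely, split the components of `u` into `F` (those with `H ⊆ I ∪ K`), `G` (those with
`H ⊆ J ∪ K` but not `H ⊆ I ∪ K`) and the rest; by (ii) the rest is orthogonal to `v y - v y₀`, so
`P(y|x) = exp ⟪F x, v y - v y₀⟫ · exp ⟪G x, v y - v y₀⟫ · P(y₀|x)`.
-/

open Finset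
open scoped RealInnerProductSpace

/-- Averaging operator π_J. -/
noncomputable def piAvg {ι : Type*} [Fintype ι] [DecidableEq ι] {Z : ι → Type*}
    [∀ i, Fintype (Z i)] [∀ i, DecidableEq (Z i)] {V : Type*} [AddCommGroup V] [Module ℝ V]
    (J : Finset ι) (w : (∀ i, Z i) → V) : (∀ i, Z i) → V :=
  fun z => (∏ i ∈ Jᶜ, (Fintype.card (Z i) : ℝ))⁻¹ •
    ∑ z' ∈ Finset.univ.filter (fun z' : ∀ i, Z i => ∀ i ∈ J, z' i = z i), w z'

/-- Interaction projection Q_I. -/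
noncomputable def Qop {ι : Type*} [Fintype ι] [DecidableEq ι] {Z : ι → Type*}
    [∀ i, Fintype (Z i)] [∀ i, DecidableEq (Z i)] {V : Type*} [AddCommGroup V] [Module ℝ V]
    (I : Finset ι) (w : (∀ i, Z i) → V) : (∀ i, Z i) → V :=
  ∑ J ∈ I.powerset, ((-1 : ℝ) ^ (I \ J).card) • piAvg J w

section Powerset

variable {ι M : Type*} [DecidableEq ι] [AddCommGroup M] [Module ℝ M]

lemma sum_powerset_insert_neg_one_pow_smul {a : ι} {s : Finset ι} (ha : a ∉ s)
    (f : Finset ι → M) :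
    ∑ t ∈ (insert a s).powerset, (-1 : ℝ) ^ #(insert a s \ t) • f t =
      ∑ t ∈ s.powerset, (-1 : ℝ) ^ #(s \ t) • (f (insert a t) - f t) := by
  rw [sum_powerset_insert ha, add_comm, ← sum_add_distrib]
  refine sum_congr rfl fun t ht => ?_
  have hat : a ∉ t := fun h => ha (mem_powerset.mp ht h)
  have h₁ : insert a s \ insert a t = s \ t := by grind
  have h₂ : insert a s \ t = insert a (s \ t) := by grind
  rw [h₁, h₂, card_insert_of_notMem (by simp [ha]), pow_succ, smul_sub]
  simp [sub_eq_add_neg]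

theorem sum_powerset_sum_powerset_neg_one_pow_smul (s : Finset ι) (f : Finset ι → M) :
    ∑ t ∈ s.powerset, ∑ r ∈ t.powerset, (-1 : ℝ) ^ #(t \ r) • f r = f s := by
  induction s using Finset.induction_on generalizing f with
  | empty => simp
  | insert a s ha ih =>
    rw [sum_powerset_insert ha, ← ih (fun r => f (insert a r)), ← sum_add_distrib]
    refine sum_congr rfl fun t ht => ?_
    rw [sum_powerset_insert_neg_one_pow_smul (fun h => ha (mem_powerset.mp ht h))]
    simp [smul_sub]

end Powerset

section Interaction

variable {ι : Type*} [Fintype ι] [DecidableEq ι] {Z : ι → Type*}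
  [∀ i, Fintype (Z i)] [∀ i, DecidableEq (Z i)]

lemma DependsOn.sum_agree_eq_card_smul_sum_agree_insert {M : Type*} [AddCommMonoid M]
    {S : Set ι} {w : (∀ i, Z i) → M} (hw : DependsOn w S)
    {i : ι} (hiS : i ∉ S) {J : Finset ι} (hiJ : i ∉ J) (x : ∀ i, Z i) :
    ∑ z ∈ univ.filter (fun z : ∀ i, Z i => ∀ j ∈ J, z j = x j), w z =
      Fintype.card (Z i) •
        ∑ z ∈ univ.filter (fun z : ∀ i, Z i => ∀ j ∈ insert i J, z j = x j), w z := by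
  rw [← sum_fiberwise _ (fun z => z i) w, ← card_univ, ← sum_const]
  refine sum_congr rfl fun a _ => ?_
  refine sum_nbij' (Function.update · i (x i)) (Function.update · i a) ?_ ?_ ?_ ?_ ?_
  all_goals intro z hz
  all_goals simp only [mem_filter, mem_univ, true_and, mem_insert] at hz ⊢
  · grind [Function.update_apply]
  · grind [Function.update_apply]
  · simp [← hz.2]
  · simp [hz i (Or.inl rfl)]
  · exact hw fun j hj => by grind [Function.update_apply]

variable {V W : Type*} [AddCommGroup V] [Module ℝ V] [AddCommGroup W] [Module ℝ W]

lemma dependsOn_piAvg (J : Finset ι) (w : (∀ i, Z i) → V) : DependsOn (piAvg J w) J := by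
  intro x x' hx
  simp only [piAvg, mem_coe] at hx ⊢
  congr 2
  ext z
  simp +contextual [hx]

lemma Qop_apply (H : Finset ι) (w : (∀ i, Z i) → V) (x : ∀ i, Z i) :
    Qop H w x = ∑ J ∈ H.powerset, (-1 : ℝ) ^ #(H \ J) • piAvg J w x := by
  simp [Qop]

lemma dependsOn_Qop (H : Finset ι) (w : (∀ i, Z i) → V) : DependsOn (Qop H w) H := by
  intro x x' hx
  simp only [Qop_apply]
  refine sum_congr rfl fun J hJ => ?_
  rw [dependsOn_piAvg J w fun i hi => hx i (mem_powerset.mp hJ hi)]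

lemma Qop_add (H : Finset ι) (w₁ w₂ : (∀ i, Z i) → V) :
    Qop H (w₁ + w₂) = Qop H w₁ + Qop H w₂ := by
  ext x
  simp [Qop_apply, piAvg, sum_add_distrib, smul_add]

lemma map_Qop (L : V →ₗ[ℝ] W) (H : Finset ι) (w : (∀ i, Z i) → V) (x : ∀ i, Z i) :
    L (Qop H w x) = Qop H (L ∘ w) x := by
  simp [Qop_apply, piAvg, map_sum, map_smul]

lemma DependsOn.piAvg_insert {S : Set ι} {w : (∀ i, Z i) → V} (hw : DependsOn w S)
    {i : ι} (hiS : i ∉ S) {J : Finset ι} (hiJ : i ∉ J) :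
    piAvg (insert i J) w = piAvg J w := by
  ext x
  have hcard : (Fintype.card (Z i) : ℝ) ≠ 0 := mod_cast (Fintype.card_pos_iff.mpr ⟨x i⟩).ne'
  have hprod : ∏ k ∈ Jᶜ, (Fintype.card (Z k) : ℝ) =
      Fintype.card (Z i) * ∏ k ∈ (insert i J)ᶜ, (Fintype.card (Z k) : ℝ) := by
    rw [compl_insert, ← mul_prod_erase _ _ (mem_compl.mpr hiJ)]
  rw [piAvg, piAvg, hw.sum_agree_eq_card_smul_sum_agree_insert hiS hiJ, hprod,
    ← Nat.cast_smul_eq_nsmul ℝ, smul_smul]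
  congr 1
  field_simp

lemma DependsOn.Qop_eq_zero {S : Set ι} {w : (∀ i, Z i) → V} (hw : DependsOn w S)
    {H : Finset ι} {i : ι} (hiH : i ∈ H) (hiS : i ∉ S) : Qop H w = 0 := by
  ext x
  rw [Qop_apply, ← insert_erase hiH, sum_powerset_insert_neg_one_pow_smul (notMem_erase i H)]
  refine sum_eq_zero fun J hJ => ?_
  have hiJ : i ∉ J := fun h => notMem_erase i H (mem_powerset.mp hJ h)
  simp [hw.piAvg_insert hiS hiJ]

lemma piAvg_univ (w : (∀ i, Z i) → V) : piAvg univ w = w := by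
  ext x
  have hagree : univ.filter (fun z : ∀ i, Z i => ∀ i ∈ univ, z i = x i) = {x} := by
    ext z
    simp [funext_iff]
  rw [piAvg, hagree]
  simp

theorem sum_Qop (w : (∀ i, Z i) → V) : ∑ H : Finset ι, Qop H w = w := by
  ext x
  simp only [Finset.sum_apply, Qop_apply]
  rw [← powerset_univ, sum_powerset_sum_powerset_neg_one_pow_smul univ (fun J => piAvg J w x),
    piAvg_univ]

lemma dependsOn_sum_Qop {A : Finset ι} {s : Finset (Finset ι)} (hs : ∀ H ∈ s, H ⊆ A)
    (w : (∀ i, Z i) → V) : DependsOn (∑ H ∈ s, Qop H w) A := by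
  intro x x' hx
  simp only [Finset.sum_apply]
  exact sum_congr rfl fun H hH => dependsOn_Qop H w fun i hi => hx i (hs H hH hi)

theorem sum_Qop_split (A B : Finset ι) (w : (∀ i, Z i) → V) :
    ∑ H with H ⊆ A, Qop H w + ∑ H with H ⊆ B ∧ ¬H ⊆ A, Qop H w +
      ∑ H with ¬H ⊆ A ∧ ¬H ⊆ B, Qop H w = w := by
  conv_rhs => rw [← sum_Qop w, ← sum_filter_add_sum_filter_not univ (· ⊆ A),
    ← sum_filter_add_sum_filter_not (univ.filter (¬· ⊆ A)) (· ⊆ B)]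
  simp only [filter_filter, and_comm, add_assoc]

lemma inner_Qop_left {E : Type*} [NormedAddCommGroup E] [InnerProductSpace ℝ E]
    (H : Finset ι) (w : (∀ i, Z i) → E) (c : E) (x : ∀ i, Z i) :
    ⟪Qop H w x, c⟫ = Qop H (fun z => ⟪w z, c⟫) x :=
  map_Qop ((innerₗ E).flip c) H w x

end Interaction

lemma Finset.inter_nonempty_of_not_subset {α : Type*} [Fintype α] [DecidableEq α]
    {s t u : Finset α} (hst : s ∪ t = univ) (hu : ¬u ⊆ t) : (u ∩ s).Nonempty := by
  obtain ⟨a, hau, hat⟩ := not_subset.mp hu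
  have has : a ∈ s ∪ t := hst ▸ mem_univ a
  exact ⟨a, mem_inter.mpr ⟨hau, by simpa [hat] using has⟩⟩

lemma Finset.not_subset_of_inter_nonempty {α : Type*} [DecidableEq α] {s t u : Finset α}
    (hu : (u ∩ s).Nonempty) (hst : Disjoint s t) : ¬u ⊆ t := fun hut => by
  obtain ⟨a, ha⟩ := hu
  exact disjoint_left.mp hst (mem_inter.mp ha).2 (hut (mem_inter.mp ha).1)

lemma Real.eq_log_div_add_log_div {t a b c a' b' : ℝ} (h : a * b * c = a' * b' * c * exp t)
    (h' : a' * b' * c ≠ 0) : t = log (a / a') + log (b / b') := by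
  have hne : a * b * c ≠ 0 := h ▸ mul_ne_zero h' (exp_pos t).ne'
  simp only [mul_ne_zero_iff] at h' hne
  have hexp : exp t = a / a' * (b / b') := by
    rw [div_mul_div_comm, eq_div_iff (mul_ne_zero h'.1.1 h'.1.2)]
    apply mul_right_cancel₀ h'.2
    linear_combination -h
  rw [← log_mul (div_ne_zero hne.1.1 h'.1.1) (div_ne_zero hne.1.2 h'.1.2), ← hexp, log_exp]

section Softmax

variable {Y : Type*} [Fintype Y] {V : Type*} [NormedAddCommGroup V] [InnerProductSpace ℝ V]
  {v : Y → V}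

lemma softmax_pos {X : Type*} {u : X → V} {P : X → Y → ℝ}
    (hP : ∀ x y, P x y = Real.exp ⟪u x, v y⟫ / ∑ y' : Y, Real.exp ⟪u x, v y'⟫)
    (x : X) (y : Y) : 0 < P x y :=
  hP x y ▸ div_pos (Real.exp_pos _) (sum_pos (fun _ _ => Real.exp_pos _) ⟨y, mem_univ y⟩)

lemma softmax_eq_mul_exp_inner_sub {X : Type*} {u : X → V} {P : X → Y → ℝ}
    (hP : ∀ x y, P x y = Real.exp ⟪u x, v y⟫ / ∑ y' : Y, Real.exp ⟪u x, v y'⟫)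
    (x : X) (y y' : Y) : P x y = P x y' * Real.exp ⟪u x, v y - v y'⟫ := by
  rw [hP, hP, inner_sub_right, Real.exp_sub, div_mul_div_comm, mul_comm,
    mul_div_mul_right _ _ (Real.exp_pos _).ne']

variable {ι : Type*} [Fintype ι] [DecidableEq ι] {X : ι → Type*}
  [∀ i, Fintype (X i)] [∀ i, DecidableEq (X i)] {u : (∀ i, X i) → V} {P : (∀ i, X i) → Y → ℝ}

theorem inner_Qop_sub_eq_zero_of_factorization
    (hP : ∀ x y, P x y = Real.exp ⟪u x, v y⟫ / ∑ y' : Y, Real.exp ⟪u x, v y'⟫)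
    {A B : Finset ι} {f g : Y → (∀ i, X i) → ℝ} {h : (∀ i, X i) → ℝ}
    (hf : ∀ y, DependsOn (f y) A) (hg : ∀ y, DependsOn (g y) B)
    {Y₀ : Set Y} (hfgh : ∀ x, ∀ y ∈ Y₀, P x y = f y x * g y x * h x)
    {y y' : Y} (hy : y ∈ Y₀) (hy' : y' ∈ Y₀) {H : Finset ι} (hHA : ¬H ⊆ A) (hHB : ¬H ⊆ B)
    (x : ∀ i, X i) : ⟪Qop H u x, v y - v y'⟫ = 0 := by
  have hsplit : (fun z => ⟪u z, v y - v y'⟫) =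
      (fun z => Real.log (f y z / f y' z)) + (fun z => Real.log (g y z / g y' z)) := by
    funext z
    refine Real.eq_log_div_add_log_div (c := h z) ?_ ?_
    · rw [← hfgh z y hy, ← hfgh z y' hy']
      exact softmax_eq_mul_exp_inner_sub hP z y y'
    · exact hfgh z y' hy' ▸ (softmax_pos hP z y').ne'
  have hF : DependsOn (fun z => Real.log (f y z / f y' z)) A := fun z z' hz => by
    simp only [hf y hz, hf y' hz]
  have hG : DependsOn (fun z => Real.log (g y z / g y' z)) B := fun z z' hz => by
    simp only [hg y hz, hg y' hz]
  obtain ⟨i, hiH, hiA⟩ := not_subset.mp hHA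
  obtain ⟨j, hjH, hjB⟩ := not_subset.mp hHB
  rw [inner_Qop_left, hsplit, Qop_add, hF.Qop_eq_zero hiH hiA, hG.Qop_eq_zero hjH hjB]
  simp

theorem exists_factorization_of_inner_Qop_eq_zero
    (hP : ∀ x y, P x y = Real.exp ⟪u x, v y⟫ / ∑ y' : Y, Real.exp ⟪u x, v y'⟫)
    {A B : Finset ι} {Y₀ : Set Y} {y₀ : Y}
    (horth : ∀ x, ∀ y ∈ Y₀, ∀ H : Finset ι, ¬H ⊆ A → ¬H ⊆ B → ⟪Qop H u x, v y - v y₀⟫ = 0) :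
    ∃ (f g : Y → (∀ i, X i) → ℝ) (h : (∀ i, X i) → ℝ),
      (∀ y, DependsOn (f y) A) ∧ (∀ y, DependsOn (g y) B) ∧
      ∀ x, ∀ y ∈ Y₀, P x y = f y x * g y x * h x := by
  set F := ∑ H with H ⊆ A, Qop H u
  set G := ∑ H with H ⊆ B ∧ ¬H ⊆ A, Qop H u
  set R := ∑ H with ¬H ⊆ A ∧ ¬H ⊆ B, Qop H u
  have hu : F + G + R = u := sum_Qop_split A B u
  have hF : DependsOn F A := dependsOn_sum_Qop (fun H hH => (mem_filter.mp hH).2) u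
  have hG : DependsOn G B := dependsOn_sum_Qop (fun H hH => (mem_filter.mp hH).2.1) u
  have hR : ∀ x, ∀ y ∈ Y₀, ⟪R x, v y - v y₀⟫ = 0 := fun x y hy => by
    simp only [R, Finset.sum_apply, sum_inner]
    exact sum_eq_zero fun H hH => horth x y hy H (mem_filter.mp hH).2.1 (mem_filter.mp hH).2.2
  refine ⟨fun y x => Real.exp ⟪F x, v y - v y₀⟫, fun y x => Real.exp ⟪G x, v y - v y₀⟫,
    fun x => P x y₀, fun y x x' hx => by simp only [hF hx], fun y x x' hx => by simp only [hG hx],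
    fun x y hy => ?_⟩
  rw [softmax_eq_mul_exp_inner_sub hP x y y₀, ← hu]
  simp only [Pi.add_apply, inner_add_left, hR x y hy, add_zero, Real.exp_add]
  ring

end Softmax

theorem relCausalIndep_iff_orthogonal_general {m : ℕ}
    (X : Fin m → Type*) [∀ i, Fintype (X i)] [∀ i, DecidableEq (X i)]
    (Y : Type*) [Fintype Y]
    (V : Type*) [NormedAddCommGroup V] [InnerProductSpace ℝ V]
    (u : (∀ i, X i) → V) (v : Y → V)
    (P : (∀ i, X i) → Y → ℝ)
    (hP : ∀ x y, P x y = Real.exp ⟪u x, v y⟫ / ∑ y' : Y, Real.exp ⟪u x, v y'⟫)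
    (I J K : Finset (Fin m))
    (hIJ : Disjoint I J) (hIK : Disjoint I K) (hJK : Disjoint J K)
    (hIJK : I ∪ J ∪ K = Finset.univ)
    (Y₀ : Set Y) (hY₀ : Y₀.Nonempty) :
    (∃ (f g : Y → (∀ i, X i) → ℝ) (h : (∀ i, X i) → ℝ),
      (∀ (y : Y) (x x' : ∀ i, X i), (∀ i ∈ I ∪ K, x i = x' i) → f y x = f y x') ∧
      (∀ (y : Y) (x x' : ∀ i, X i), (∀ i ∈ J ∪ K, x i = x' i) → g y x = g y x') ∧
      (∀ (x : ∀ i, X i), ∀ y ∈ Y₀, P x y = f y x * g y x * h x)) ↔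
    (∀ (x : ∀ i, X i), ∀ y ∈ Y₀, ∀ y' ∈ Y₀, ∀ H : Finset (Fin m),
      (H ∩ I).Nonempty → (H ∩ J).Nonempty → ⟪Qop H u x, v y - v y'⟫ = 0) := by
  constructor
  · rintro ⟨f, g, h, hf, hg, hfgh⟩ x y hy y' hy' H hHI hHJ
    exact inner_Qop_sub_eq_zero_of_factorization hP hf hg hfgh hy hy'
      (not_subset_of_inter_nonempty hHJ (disjoint_union_right.mpr ⟨hIJ.symm, hJK⟩))
      (not_subset_of_inter_nonempty hHI (disjoint_union_right.mpr ⟨hIJ, hIK⟩)) x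
  · intro horth
    obtain ⟨y₀, hy₀⟩ := hY₀
    have hI : I ∪ (J ∪ K) = univ := by rw [← union_assoc, hIJK]
    have hJ : J ∪ (I ∪ K) = univ := by rw [union_left_comm, ← union_assoc, hIJK]
    exact exists_factorization_of_inner_Qop_eq_zero hP (A := I ∪ K) (B := J ∪ K)
      fun x y hy H hHA hHB => horth x y hy y₀ hy₀ H
        (inter_nonempty_of_not_subset hI hHB) (inter_nonempty_of_not_subset hJ hHA)

/-- "relative causal independence"
`P(y|x) = f(y, x_I, x_K) · g(y, x_J, x_K) · h(x)` for all `x ∈ X` and `y ∈ Y₀` is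
equivalent to `⟨u_H(x), v(y) − v(y')⟩ = 0` for all `x`, all `y, y' ∈ Y₀`, and all `H`
meeting both `I` and `J`. -/
theorem relCausalIndep_iff_orthogonal {m : ℕ}
    (X : Fin m → Type*) [∀ i, Fintype (X i)] [∀ i, Nonempty (X i)] [∀ i, DecidableEq (X i)]
    (Y : Type*) [Fintype Y] [Nonempty Y]
    (V : Type*) [NormedAddCommGroup V] [InnerProductSpace ℝ V] [FiniteDimensional ℝ V]
    (u : (∀ i, X i) → V) (v : Y → V)
    (P : (∀ i, X i) → Y → ℝ)
    (hP : ∀ x y, P x y = Real.exp ⟪u x, v y⟫ / ∑ y' : Y, Real.exp ⟪u x, v y'⟫)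
    (I J K : Finset (Fin m))
    (hIJ : Disjoint I J) (hIK : Disjoint I K) (hJK : Disjoint J K)
    (hIJK : I ∪ J ∪ K = Finset.univ)
    (Y₀ : Set Y) (hY₀ : Y₀.Nonempty) :
    (∃ (f g : Y → (∀ i, X i) → ℝ) (h : (∀ i, X i) → ℝ),
      (∀ (y : Y) (x x' : ∀ i, X i), (∀ i ∈ I ∪ K, x i = x' i) → f y x = f y x') ∧
      (∀ (y : Y) (x x' : ∀ i, X i), (∀ i ∈ J ∪ K, x i = x' i) → g y x = g y x') ∧
      (∀ (x : ∀ i, X i), ∀ y ∈ Y₀, P x y = f y x * g y x * h x)) ↔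
    (∀ (x : ∀ i, X i), ∀ y ∈ Y₀, ∀ y' ∈ Y₀, ∀ H : Finset (Fin m),
      (H ∩ I).Nonempty → (H ∩ J).Nonempty → ⟪Qop H u x, v y - v y'⟫ = 0) :=
  relCausalIndep_iff_orthogonal_general X Y V u v P hP I J K hIJ hIK hJK hIJK Y₀ hY₀
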